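/- arXiv:2004.10319 — 2 statements merged into one kernel-verified Lean document; each statement's English description precedes it below -/
import Mathlib

section
/- Let V be a finite vertex type, let G be a simple graph on V, let c, u, v ∈ V with u and v both reachable from c in G and with d_G(c,u) ≤ d_G(c,v), where d_G denotes the (unweighted) shortest-path distance. Let p ∈ (0,1) and let the random radius R be distributed according to the geometric distribution with success parameter p. Then the probability that u lies in the ball of radius R around c while v does not — i.e., the probability that d_G(c,u) ≤ R < d_G(c,v) — is at most p·(d_G(c,v) − d_G(c,u)). In particular, if u and v are adjacent in G, this probability is at most p. -/
open MeasureTheory ProbabilityTheory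

/-- Single-round, unit-weight instance of the ball-growing lemma: for vertices
`c, u, v` of a finite simple graph `G` with `u, v` reachable from `c` and
`d_G(c,u) ≤ d_G(c,v)`, and a geometric random radius `R` with success parameter
`p ∈ (0,1)`, the probability that `d_G(c,u) ≤ R < d_G(c,v)` (the ball around `c`
contains `u` but not `v`) is at most `p * (d_G(c,v) - d_G(c,u))`; in particular,
if `u` and `v` are adjacent, this probability is at most `p`. -/
theorem ball_growing_separation_prob {V : Type*} [Fintype V] (G : SimpleGraph V)
    (c u v : V) (hu : G.Reachable c u) (hv : G.Reachable c v)
    (hd : G.dist c u ≤ G.dist c v) {p : ℝ} (hp : 0 < p) (hp1 : p < 1) :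
    (geometricPMF hp hp1.le).toMeasure {r : ℕ | G.dist c u ≤ r ∧ r < G.dist c v}
        ≤ ENNReal.ofReal (p * ((G.dist c v : ℝ) - (G.dist c u : ℝ))) ∧
      (G.Adj u v →
        (geometricPMF hp hp1.le).toMeasure {r : ℕ | G.dist c u ≤ r ∧ r < G.dist c v}
          ≤ ENNReal.ofReal p) := by
  set a := G.dist c u with ha
  set b := G.dist c v with hb
  have hset : {r : ℕ | a ≤ r ∧ r < b} = ↑(Finset.Ico a b) := by
    ext r; simp
  have hmeas : (geometricPMF hp hp1.le).toMeasure {r : ℕ | a ≤ r ∧ r < b}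
      = ∑ k ∈ Finset.Ico a b, geometricPMF hp hp1.le k := by
    rw [hset, PMF.toMeasure_apply_finset]
  have hterm : ∀ k : ℕ, geometricPMF hp hp1.le k ≤ ENNReal.ofReal p := by
    intro k
    show ENNReal.ofReal (geometricPMFReal p k) ≤ ENNReal.ofReal p
    apply ENNReal.ofReal_le_ofReal
    rw [geometricPMFReal]
    calc (1 - p) ^ k * p ≤ 1 ^ k * p := by
          apply mul_le_mul_of_nonneg_right _ hp.le
          exact pow_le_pow_left₀ (by linarith) (by linarith) k
      _ = p := by ring
  have hmain : (geometricPMF hp hp1.le).toMeasure {r : ℕ | a ≤ r ∧ r < b}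
      ≤ ENNReal.ofReal (p * ((b : ℝ) - (a : ℝ))) := by
    rw [hmeas]
    calc ∑ k ∈ Finset.Ico a b, geometricPMF hp hp1.le k
        ≤ ∑ _k ∈ Finset.Ico a b, ENNReal.ofReal p :=
          Finset.sum_le_sum fun k _ ↦ hterm k
      _ = (b - a : ℕ) * ENNReal.ofReal p := by
          rw [Finset.sum_const, Nat.card_Ico]; simp [mul_comm]
      _ = ENNReal.ofReal (p * ((b : ℝ) - (a : ℝ))) := by
          rw [← ENNReal.ofReal_natCast, ← ENNReal.ofReal_mul (by positivity)]
          congr 1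
          rw [Nat.cast_sub hd]
          ring
  refine ⟨hmain, fun hadj ↦ ?_⟩
  have hb1 : b ≤ a + 1 := by
    obtain ⟨w, hw⟩ := hu.exists_walk_length_eq_dist
    have := SimpleGraph.dist_le (w.append hadj.toWalk)
    simpa [SimpleGraph.Walk.length_append, hw] using this
  refine hmain.trans (ENNReal.ofReal_le_ofReal ?_)
  have : (b : ℝ) - (a : ℝ) ≤ 1 := by
    have : (b:ℝ) ≤ (a:ℝ) + 1 := by exact_mod_cast hb1
    linarith
  nlinarith
end

section
/- There exists a constant C > 0 such that the following holds. For every finite connected simple graph G on n ≥ 2 vertices and every β ∈ (0,1), there exists a probability distribution (a PMF) γ over partitions of the vertex set of G such that: (i) for every partition in the support of γ, every block has weak diameter at most C·β⁻¹·(log n)² in G (i.e., any two vertices in the same block have shortest-path distance at most C·β⁻¹·(log n)² in G); and (ii) for every edge (u,v) of G, the probability (over γ) that u and v lie in different blocks is at most β. -/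
/-!
Ball carving. Run through the vertices in a fixed order; each vertex `c` draws a radius `r_c`
from the geometric distribution with parameter `p = β / 2` truncated at `R ≈ 6 β⁻¹ log n`, and
captures every vertex within distance `r_c` not captured before. Every block lies in a ball of
radius `R`, so it has weak diameter at most `2 R`.

For an edge `uv`, the distances `d(c, u)` and `d(c, v)` differ by at most one, so with
`a = min (d(c, u), d(c, v))` the centre `c` captures neither endpoint if `r_c < a`, both if
`r_c > a`, and can separate them only if `r_c = a`. Hence the cut probability of a run over
`c :: L` is at most `P(r_c = a) + P(r_c < a) · P_L`, and the memorylessness bound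
`P(r_c = a) ≤ p · P(r_c ≥ a) + (1 - p)^R` gives `P_L ≤ p + |L| (1 - p)^R` by induction on `L`.
Since `R ≥ 6 β⁻¹ log n` gives `(1 - p)^R ≤ n⁻³`, this is at most `β` once `β > n⁻¹`.
When `β⁻¹ ≥ n` the single-block partition already works, since `G` has diameter less than `n`.
-/

open Finset
open scoped ENNReal

lemma mul_geom_sum_add_pow {α : Type*} [CommSemiring α] {p q : α} (hpq : p + q = 1) (n : ℕ) :
    p * ∑ j ∈ range n, q ^ j + q ^ n = 1 := by
  induction n with
  | zero => simp
  | succ n ih =>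
    calc p * ∑ j ∈ range (n + 1), q ^ j + q ^ (n + 1)
        = p * ∑ j ∈ range n, q ^ j + q ^ n * (p + q) := by rw [sum_range_succ]; ring
      _ = 1 := by rw [hpq, mul_one, ih]

namespace PMF

lemma toOuterMeasure_apply_le_one {α : Type*} (μ : PMF α) (s : Set α) :
    μ.toOuterMeasure s ≤ 1 := by
  rw [toOuterMeasure_apply, ← μ.tsum_coe]
  exact ENNReal.tsum_le_tsum (Set.indicator_le_self s μ)

variable {p q : ℝ≥0∞}

noncomputable def truncGeometricWeight (p q : ℝ≥0∞) (R j : ℕ) : ℝ≥0∞ :=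
  if j < R then p * q ^ j else if j = R then q ^ R else 0

/-- `q` stands for `1 - p`; passing it with `p + q = 1` avoids truncated subtraction in `ℝ≥0∞`. -/
noncomputable def truncGeometric (hpq : p + q = 1) (R : ℕ) : PMF ℕ :=
  ofFinset (truncGeometricWeight p q R) (range (R + 1))
    (by
      rw [sum_range_succ, ← mul_geom_sum_add_pow hpq R, mul_sum]
      congr 1
      · exact sum_congr rfl fun j hj => if_pos (mem_range.1 hj)
      · simp [truncGeometricWeight])
    (fun j hj => by
      rw [mem_range] at hj
      simp only [truncGeometricWeight]
      rw [if_neg (by omega), if_neg (by omega)])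

lemma le_of_mem_support_truncGeometric (hpq : p + q = 1) {R r : ℕ}
    (hr : r ∈ (truncGeometric hpq R).support) : r ≤ R := by
  simp only [truncGeometric, support_ofFinset, Set.mem_inter_iff, coe_range, Set.mem_Iio] at hr
  omega

lemma truncGeometric_apply_add_le (hpq : p + q = 1) (R a : ℕ) :
    truncGeometric hpq R a + p * (truncGeometric hpq R).toOuterMeasure (Set.Iio a) ≤
      p + q ^ R := by
  set ρ := truncGeometric hpq R
  rcases lt_or_ge a R with ha | ha
  · have hlt : ρ.toOuterMeasure (Set.Iio a) = p * ∑ j ∈ range a, q ^ j := by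
      rw [← coe_range, toOuterMeasure_apply_finset, mul_sum]
      exact sum_congr rfl fun j hj => if_pos ((mem_range.1 hj).trans ha)
    have heq : ρ a = p * q ^ a := if_pos ha
    calc ρ a + p * ρ.toOuterMeasure (Set.Iio a)
        = p * (p * ∑ j ∈ range a, q ^ j + q ^ a) := by rw [hlt, heq]; ring
      _ = p := by rw [mul_geom_sum_add_pow hpq, mul_one]
      _ ≤ p + q ^ R := le_self_add
  · have hρa : ρ a ≤ q ^ R := by
      change truncGeometricWeight p q R a ≤ q ^ R
      unfold truncGeometricWeight
      split_ifs
      · omega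
      · exact le_rfl
      · exact zero_le
    calc ρ a + p * ρ.toOuterMeasure (Set.Iio a) ≤ q ^ R + p * 1 := by
          gcongr; exact ρ.toOuterMeasure_apply_le_one _
      _ = p + q ^ R := by ring

end PMF

namespace SimpleGraph

variable {V : Type*} (G : SimpleGraph V)

noncomputable def carve (c : V) (r : ℕ) (g : V → Option V) : V → Option V :=
  fun w => if G.dist c w ≤ r then some c else g w

/-- `g w = some c` means that `w` was captured by the centre `c`, and `none` that no centre of
the list captured it. The head of the list carves last, overriding the tail. -/
noncomputable def ballCarving (ρ : PMF ℕ) : List V → PMF (V → Option V)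
  | [] => PMF.pure fun _ => none
  | c :: L => ρ.bind fun r => (ballCarving ρ L).map (G.carve c r)

variable {G} {ρ : PMF ℕ} {L : List V} {g : V → Option V}

lemma mem_support_ballCarving_cons {c : V} :
    g ∈ (G.ballCarving ρ (c :: L)).support ↔
      ∃ r ∈ ρ.support, ∃ g' ∈ (G.ballCarving ρ L).support, G.carve c r g' = g := by
  simp [ballCarving, PMF.support_map]

lemma isSome_of_mem_support_ballCarving (hg : g ∈ (G.ballCarving ρ L).support) {w : V}
    (hw : w ∈ L) : (g w).isSome := by
  induction L generalizing g with
  | nil => simp at hw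
  | cons c L ih =>
    obtain ⟨r, -, g', hg', rfl⟩ := mem_support_ballCarving_cons.1 hg
    rcases List.mem_cons.1 hw with rfl | hw
    · simp [carve]
    · by_cases h : G.dist c w ≤ r
      · simp [carve, h]
      · simpa [carve, h] using ih hg' hw

lemma dist_le_of_mem_support_ballCarving {R : ℕ} (hρ : ∀ r ∈ ρ.support, r ≤ R)
    (hg : g ∈ (G.ballCarving ρ L).support) {c w : V} (hw : g w = some c) : G.dist c w ≤ R := by
  induction L generalizing g with
  | nil => simp_all [ballCarving]
  | cons c' L ih =>
    obtain ⟨r, hr, g', hg', rfl⟩ := mem_support_ballCarving_cons.1 hg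
    by_cases h : G.dist c' w ≤ r
    · obtain rfl : c' = c := by simpa [carve, h] using hw
      exact h.trans (hρ r hr)
    · exact ih hg' (by simpa [carve, h] using hw)

lemma dist_le_of_mem_support_ballCarving_of_eq (hG : G.Connected) {R : ℕ}
    (hρ : ∀ r ∈ ρ.support, r ≤ R) (hg : g ∈ (G.ballCarving ρ L).support) {u v : V} (hu : u ∈ L)
    (huv : g u = g v) : G.dist u v ≤ 2 * R := by
  obtain ⟨c, hc⟩ := Option.isSome_iff_exists.1 (isSome_of_mem_support_ballCarving hg hu)
  have hcu := dist_le_of_mem_support_ballCarving hρ hg hc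
  have hcv := dist_le_of_mem_support_ballCarving hρ hg (huv ▸ hc)
  calc G.dist u v ≤ G.dist u c + G.dist c v := hG.dist_triangle
    _ ≤ 2 * R := by rw [dist_comm]; omega

lemma toOuterMeasure_carve_preimage_le (μ : PMF (V → Option V)) {u v : V} (huv : G.Adj u v)
    (c : V) (r : ℕ) :
    μ.toOuterMeasure (G.carve c r ⁻¹' {g | g u ≠ g v}) ≤
      (if r = min (G.dist c u) (G.dist c v) then 1 else 0) +
        if r < min (G.dist c u) (G.dist c v) then μ.toOuterMeasure {g | g u ≠ g v} else 0 := by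
  have hdist := huv.diff_dist_adj (u := c)
  rcases lt_trichotomy r (min (G.dist c u) (G.dist c v)) with hr | hr | hr
  · have hpre : G.carve c r ⁻¹' {g | g u ≠ g v} = {g | g u ≠ g v} := by
      ext g
      simp [carve, show ¬ G.dist c u ≤ r by omega, show ¬ G.dist c v ≤ r by omega]
    simp [hpre, hr, hr.ne]
  · simpa [hr] using μ.toOuterMeasure_apply_le_one _
  · have hpre : G.carve c r ⁻¹' {g | g u ≠ g v} = ∅ := by
      ext g
      simp [carve, show G.dist c u ≤ r by omega, show G.dist c v ≤ r by omega]
    simp [hpre]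

/-- `hρ` is the memorylessness bound `ρ {a} ≤ p · ρ [a, ∞) + ε`, with `ρ [a, ∞) = 1 - ρ [0, a)`
moved across to avoid subtraction in `ℝ≥0∞`. -/
lemma ballCarving_cut_le {p ε : ℝ≥0∞}
    (hρ : ∀ a, ρ a + p * ρ.toOuterMeasure (Set.Iio a) ≤ p + ε) {u v : V} (huv : G.Adj u v)
    (L : List V) :
    (G.ballCarving ρ L).toOuterMeasure {g | g u ≠ g v} ≤ p + L.length * ε := by
  induction L with
  | nil => simp [ballCarving, PMF.toOuterMeasure_pure_apply]
  | cons c L ih =>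
    set X := (G.ballCarving ρ L).toOuterMeasure {g | g u ≠ g v}
    set a := min (G.dist c u) (G.dist c v)
    have hsplit : ∑' r, ρ r * ((if r = a then 1 else 0) + if r < a then X else 0)
        = ρ a + ρ.toOuterMeasure (Set.Iio a) * X := by
      simp only [mul_add, ENNReal.tsum_add, mul_ite, mul_one, mul_zero, tsum_ite_eq,
        PMF.toOuterMeasure_apply, ← ENNReal.tsum_mul_right, Set.indicator_apply, Set.mem_Iio,
        ite_mul, zero_mul]
    calc (G.ballCarving ρ (c :: L)).toOuterMeasure {g | g u ≠ g v}
        = ∑' r, ρ r * (G.ballCarving ρ L).toOuterMeasure (G.carve c r ⁻¹' {g | g u ≠ g v}) := by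
          simp only [ballCarving, PMF.toOuterMeasure_bind_apply, PMF.toOuterMeasure_map_apply]
      _ ≤ ∑' r, ρ r * ((if r = a then 1 else 0) + if r < a then X else 0) :=
          ENNReal.tsum_le_tsum fun r => by gcongr; exact toOuterMeasure_carve_preimage_le _ huv c r
      _ ≤ ρ a + ρ.toOuterMeasure (Set.Iio a) * (p + L.length * ε) := by rw [hsplit]; gcongr
      _ ≤ ρ a + p * ρ.toOuterMeasure (Set.Iio a) + 1 * (L.length * ε) := by
          rw [mul_add, add_assoc, mul_comm]
          gcongr
          exact ρ.toOuterMeasure_apply_le_one _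
      _ ≤ p + ε + L.length * ε := add_le_add (hρ a) (one_mul _).le
      _ = p + (c :: L).length * ε := by rw [List.length_cons]; push_cast; ring

section Fintype

variable [Fintype V]

lemma Connected.dist_lt_card (hG : G.Connected) (u v : V) : G.dist u v < Fintype.card V := by
  obtain ⟨p, hp, hlen⟩ := hG.exists_path_of_dist u v
  exact hlen ▸ hp.length_lt

noncomputable def ballCarvingPartition (G : SimpleGraph V) (ρ : PMF ℕ) : PMF (Setoid V) :=
  (G.ballCarving ρ Finset.univ.toList).map Setoid.ker

lemma dist_le_of_mem_support_ballCarvingPartition (hG : G.Connected) {R : ℕ}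
    (hρ : ∀ r ∈ ρ.support, r ≤ R) {s : Setoid V} (hs : s ∈ (G.ballCarvingPartition ρ).support)
    {u v : V} (huv : s u v) : G.dist u v ≤ 2 * R := by
  rw [ballCarvingPartition, PMF.support_map] at hs
  obtain ⟨g, hg, rfl⟩ := hs
  exact dist_le_of_mem_support_ballCarving_of_eq hG hρ hg (mem_toList.2 (mem_univ u)) huv

lemma ballCarvingPartition_cut_le {p ε : ℝ≥0∞}
    (hρ : ∀ a, ρ a + p * ρ.toOuterMeasure (Set.Iio a) ≤ p + ε) {u v : V} (huv : G.Adj u v) :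
    (G.ballCarvingPartition ρ).toOuterMeasure {s | ¬ s u v} ≤ p + Fintype.card V * ε := by
  rw [ballCarvingPartition, PMF.toOuterMeasure_map_apply, ← card_univ, ← length_toList]
  exact ballCarving_cut_le hρ huv _

end Fintype

end SimpleGraph

lemma ENNReal.ofReal_add_natCast_mul_ofReal_pow {a b : ℝ} (ha : 0 ≤ a) (hb : 0 ≤ b) (n R : ℕ) :
    ENNReal.ofReal a + n * ENNReal.ofReal b ^ R = ENNReal.ofReal (a + n * b ^ R) := by
  rw [ENNReal.ofReal_add ha (by positivity), ENNReal.ofReal_mul (by positivity),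
    ENNReal.ofReal_pow hb, ENNReal.ofReal_natCast]

open Real

lemma half_lt_log {n : ℝ} (hn : 2 ≤ n) : 1 / 2 < log n :=
  calc (1 : ℝ) / 2 < log 2 := by linarith [log_two_gt_d9]
    _ ≤ log n := log_le_log two_pos hn

lemma one_sub_pow_le_exp_neg_mul {p : ℝ} (hp : p ≤ 1) (R : ℕ) :
    (1 - p) ^ R ≤ exp (-(p * R)) :=
  calc (1 - p) ^ R ≤ exp (-p) ^ R := pow_le_pow_left₀ (by linarith) (one_sub_le_exp_neg p) R
    _ = exp (-(p * R)) := by rw [← exp_nat_mul]; ring_nf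

lemma half_add_mul_one_sub_half_pow_le {n β : ℝ} (hn : 2 ≤ n) (hβ : β ≤ 2) (hnβ : 1 < n * β)
    {R : ℕ} (hR : 6 * β⁻¹ * log n ≤ R) : β / 2 + n * (1 - β / 2) ^ R ≤ β := by
  have hn0 : 0 < n := by linarith
  have hβ0 : 0 < β := pos_of_mul_pos_right (by linarith) hn0.le
  have hexp : 3 * log n ≤ β / 2 * R :=
    calc 3 * log n = β / 2 * (6 * β⁻¹ * log n) := by field_simp; ring
      _ ≤ β / 2 * R := by gcongr
  have htail : (1 - β / 2) ^ R ≤ (n ^ 3)⁻¹ :=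
    calc (1 - β / 2) ^ R ≤ exp (-(β / 2 * R)) := one_sub_pow_le_exp_neg_mul (by linarith) R
      _ ≤ exp (-log (n ^ 3)) := exp_le_exp.2 (by rw [log_pow]; push_cast; linarith)
      _ = (n ^ 3)⁻¹ := by rw [exp_neg, exp_log (by positivity)]
  have hsq : n * (n ^ 3)⁻¹ ≤ β / 2 := by
    rw [show n * (n ^ 3)⁻¹ = n⁻¹ * n⁻¹ by field_simp]
    have h1 : n⁻¹ < β := by rw [inv_lt_iff_one_lt_mul₀ hn0]; linarith
    have h2 : n⁻¹ ≤ 2⁻¹ := (inv_le_inv₀ hn0 two_pos).2 hn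
    nlinarith [inv_pos.2 hn0]
  nlinarith [mul_le_mul_of_nonneg_left htail hn0.le]

lemma two_mul_natCeil_le {β L : ℝ} (hβ0 : 0 < β) (hβ1 : β ≤ 1) (hL : 1 / 2 < L) :
    2 * (⌈6 * β⁻¹ * L⌉₊ : ℝ) ≤ 32 * β⁻¹ * L ^ 2 := by
  have hceil : (⌈6 * β⁻¹ * L⌉₊ : ℝ) < 6 * β⁻¹ * L + 1 := Nat.ceil_lt_add_one (by positivity)
  have hβinv : 1 ≤ β⁻¹ := (one_le_inv₀ hβ0).2 hβ1
  nlinarith [mul_pos (inv_pos.2 hβ0) (by linarith : 0 < L)]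

/-- Static, unit-weight probabilistic weak low-diameter decomposition: there is a
constant `C > 0` such that every finite connected simple graph on `n ≥ 2` vertices
admits, for every `β ∈ (0,1)`, a probability distribution over partitions (given as
setoids) of its vertex set in which (i) every partition in the support has all
blocks of weak diameter at most `C * β⁻¹ * (log n)²`, and (ii) every edge has
probability at most `β` of having its endpoints in different blocks. -/
theorem probabilistic_weak_LDD :
    ∃ C : ℝ, 0 < C ∧
      ∀ (V : Type) [Fintype V] (G : SimpleGraph V), G.Connected →
        2 ≤ Fintype.card V →
        ∀ β : ℝ, 0 < β → β < 1 →
          ∃ γ : PMF (Setoid V),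
            (∀ s ∈ γ.support, ∀ u v : V, s u v →
              (G.dist u v : ℝ) ≤ C * β⁻¹ * Real.log (Fintype.card V) ^ 2) ∧
            (∀ u v : V, G.Adj u v →
              γ.toOuterMeasure {s : Setoid V | ¬ s u v} ≤ ENNReal.ofReal β) := by
  refine ⟨32, by norm_num, fun V _ G hG hcard β hβ0 hβ1 => ?_⟩
  set n : ℝ := (Fintype.card V : ℝ)
  have hn : (2 : ℝ) ≤ n := Nat.ofNat_le_cast.2 hcard
  have hlog := half_lt_log hn
  rcases le_or_gt n β⁻¹ with hsmall | hlarge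
  · refine ⟨PMF.pure ⊤, fun s _ u v _ => ?_, fun u v _ => ?_⟩
    · have hlog_sq : 1 ≤ 32 * log n ^ 2 := by nlinarith
      calc (G.dist u v : ℝ) ≤ n := (Nat.cast_lt.2 (hG.dist_lt_card u v)).le
        _ ≤ β⁻¹ := hsmall
        _ ≤ 32 * β⁻¹ * log n ^ 2 := by nlinarith [inv_pos.2 hβ0]
    · simp [PMF.toOuterMeasure_pure_apply]
  · set R := ⌈6 * β⁻¹ * log n⌉₊
    have hpq : ENNReal.ofReal (β / 2) + ENNReal.ofReal (1 - β / 2) = 1 := by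
      rw [← ENNReal.ofReal_add (by linarith) (by linarith)]; norm_num
    refine ⟨G.ballCarvingPartition (PMF.truncGeometric hpq R), fun s hs u v huv => ?_,
      fun u v huv => ?_⟩
    · calc (G.dist u v : ℝ) ≤ 2 * R := mod_cast G.dist_le_of_mem_support_ballCarvingPartition hG
            (fun _ => PMF.le_of_mem_support_truncGeometric hpq) hs huv
        _ ≤ 32 * β⁻¹ * log n ^ 2 := two_mul_natCeil_le hβ0 hβ1.le hlog
    · have hnβ : 1 < n * β := by rw [inv_lt_iff_one_lt_mul₀ hβ0] at hlarge; linarith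
      calc _ ≤ ENNReal.ofReal (β / 2) + (Fintype.card V : ℝ≥0∞) * ENNReal.ofReal (1 - β / 2) ^ R :=
            G.ballCarvingPartition_cut_le (PMF.truncGeometric_apply_add_le hpq R) huv
        _ = ENNReal.ofReal (β / 2 + n * (1 - β / 2) ^ R) :=
            ENNReal.ofReal_add_natCast_mul_ofReal_pow (by linarith) (by linarith) _ _
        _ ≤ ENNReal.ofReal β := ENNReal.ofReal_le_ofReal <|
            half_add_mul_one_sub_half_pow_le hn (by linarith) hnβ (Nat.le_ceil _)
end
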